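/- arXiv:1510.07301 — 4 statements merged into one kernel-verified Lean document; each statement's English description precedes it below -/
import Mathlib

section
/- Let P_N(i,j,q) = Σ_n p_N(i,j,n) q^n where p_N(i,j,n) counts partitions of n into distinct parts ≤ N with i odd-indexed odd parts and j even-indexed odd parts. Then for all non-negative integers N, i, j with ν ∈ {0,1} and N ≥ 1−ν: P_{2N+ν}(i,j,q) = P_{2N+ν−1}(i,j,q) + q^{2N+ν}·χ(i≥ν)·P_{2N+ν−1}(j, i−ν, q), with initial condition P_0(i,j,q) = δ_{i,0}δ_{j,0}. -/
def IsDistinctPartition (π : List ℕ) : Prop :=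
  π.Chain' (· > ·) ∧ ∀ p ∈ π, 0 < p

def IsPartition (π : List ℕ) : Prop :=
  π.Chain' (· ≥ ·) ∧ ∀ p ∈ π, 0 < p

def oddIdxOdd (π : List ℕ) : ℕ :=
  ((π.zipIdx.map Prod.swap).filter fun p => p.1 % 2 == 0 && p.2 % 2 == 1).length

def evenIdxOdd (π : List ℕ) : ℕ :=
  ((π.zipIdx.map Prod.swap).filter fun p => p.1 % 2 == 1 && p.2 % 2 == 1).length

def bgRank (π : List ℕ) : ℤ := (oddIdxOdd π : ℤ) - evenIdxOdd π

def altSum : List ℕ → ℤ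
  | [] => 0
  | a :: t => (a : ℤ) - altSum t

noncomputable def gaussPoly : ℕ → ℕ → Polynomial ℚ
  | _, 0 => 1
  | 0, _ + 1 => 0
  | m + 1, r + 1 => gaussPoly m r + Polynomial.X ^ (r + 1) * gaussPoly m (r + 1)

noncomputable def gaussZ (m : ℕ) (r : ℤ) : Polynomial ℚ :=
  if 0 ≤ r then gaussPoly m r.toNat else 0

noncomputable def P (N i j : ℕ) : PowerSeries ℚ :=
  PowerSeries.mk fun n =>
    (Nat.card {π : List ℕ // IsDistinctPartition π ∧ (∀ p ∈ π, p ≤ N) ∧ π.sum = n ∧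
      oddIdxOdd π = i ∧ evenIdxOdd π = j} : ℚ)

/-!
Sort on whether the largest part of a partition counted by `P M i j` equals `M`. If it does not,
all parts are at most `M - 1`. If it does, deleting it moves every remaining part up one
position, which exchanges odd and even positions: the rest is counted by
`P (M - 1) j (i - [M odd])`, and the deleted part contributes `q ^ M`.
-/

lemma countP_swap_zipIdx_succ (l : List ℕ) (k : ℕ) (f : ℕ × ℕ → Bool) :
    ((l.zipIdx (k + 1)).map Prod.swap).countP f
      = ((l.zipIdx k).map Prod.swap).countP fun p => f (p.1 + 1, p.2) := by
  simp only [List.zipIdx_succ, List.map_map, List.countP_map]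
  rfl

lemma succ_mod_two_beq_zero (n : ℕ) : ((n + 1) % 2 == 0) = (n % 2 == 1) := by
  rcases Nat.mod_two_eq_zero_or_one n with h | h <;> simp [Nat.add_mod, h]

lemma succ_mod_two_beq_one (n : ℕ) : ((n + 1) % 2 == 1) = (n % 2 == 0) := by
  rcases Nat.mod_two_eq_zero_or_one n with h | h <;> simp [Nat.add_mod, h]

lemma oddIdxOdd_cons (a : ℕ) (l : List ℕ) : oddIdxOdd (a :: l) = a % 2 + evenIdxOdd l := by
  simp only [oddIdxOdd, evenIdxOdd, ← List.countP_eq_length_filter, List.zipIdx_cons,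
    List.map_cons, List.countP_cons, countP_swap_zipIdx_succ l 0, succ_mod_two_beq_zero]
  rcases Nat.mod_two_eq_zero_or_one a with h | h <;> simp [h, add_comm]

lemma evenIdxOdd_cons (a : ℕ) (l : List ℕ) : evenIdxOdd (a :: l) = oddIdxOdd l := by
  simp [oddIdxOdd, evenIdxOdd, ← List.countP_eq_length_filter, countP_swap_zipIdx_succ l 0,
    succ_mod_two_beq_one]

lemma isDistinctPartition_iff (π : List ℕ) :
    IsDistinctPartition π ↔ π.IsChain (· > ·) ∧ ∀ p ∈ π, 0 < p :=
  Iff.rfl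

lemma isDistinctPartition_cons_iff (a : ℕ) (τ : List ℕ) :
    IsDistinctPartition (a :: τ) ↔ IsDistinctPartition τ ∧ (∀ p ∈ τ, p < a) ∧ 0 < a := by
  simp only [isDistinctPartition_iff, List.isChain_iff_pairwise, List.pairwise_cons, List.mem_cons,
    forall_eq_or_imp]
  tauto

lemma finite_setOf_isChain_gt_forall_le (N : ℕ) :
    {π : List ℕ | π.IsChain (· > ·) ∧ ∀ p ∈ π, p ≤ N}.Finite := by
  refine Set.Finite.of_finite_image (f := List.toFinset)
    ((Finset.range (N + 1)).powerset.finite_toSet.subset ?_) ?_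
  · rintro _ ⟨π, ⟨-, hle⟩, rfl⟩
    exact Finset.mem_powerset.2 fun p hp =>
      Finset.mem_range_succ_iff.2 (hle p (List.mem_toFinset.1 hp))
  · intro π₁ h₁ π₂ h₂ h
    refine h₁.1.sortedGT.eq_of_mem_iff h₂.1.sortedGT fun p => ?_
    rw [← List.mem_toFinset, h, List.mem_toFinset]

def distinctPartitions (N i j n : ℕ) : Set (List ℕ) :=
  {π | IsDistinctPartition π ∧ (∀ p ∈ π, p ≤ N) ∧ π.sum = n ∧
    oddIdxOdd π = i ∧ evenIdxOdd π = j}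

lemma coeff_P (N i j n : ℕ) :
    PowerSeries.coeff n (P N i j) = (distinctPartitions N i j n).ncard := by
  rw [P, PowerSeries.coeff_mk, ← Nat.card_coe_set_eq]
  rfl

lemma finite_distinctPartitions (N i j n : ℕ) : (distinctPartitions N i j n).Finite :=
  (finite_setOf_isChain_gt_forall_le N).subset fun _ hπ => ⟨hπ.1.1, hπ.2.1⟩

lemma nil_mem_distinctPartitions_iff (N i j n : ℕ) :
    [] ∈ distinctPartitions N i j n ↔ n = 0 ∧ i = 0 ∧ j = 0 := by
  simp [distinctPartitions, isDistinctPartition_iff, oddIdxOdd, evenIdxOdd, eq_comm]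

lemma cons_mem_distinctPartitions_iff (N i j n a : ℕ) (τ : List ℕ) :
    a :: τ ∈ distinctPartitions N i j n ↔ 0 < a ∧ a ≤ N ∧ a ≤ n ∧ a % 2 ≤ i ∧
      τ ∈ distinctPartitions (a - 1) j (i - a % 2) (n - a) := by
  simp only [distinctPartitions, Set.mem_ofPred_eq, isDistinctPartition_cons_iff, List.mem_cons,
    forall_eq_or_imp, List.sum_cons, oddIdxOdd_cons, evenIdxOdd_cons]
  constructor
  · rintro ⟨⟨hτ, hlt, ha⟩, ⟨haN, -⟩, hsum, hi, hj⟩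
    exact ⟨ha, haN, by omega, by omega, hτ, fun p hp => by have := hlt p hp; omega, by omega, hj,
      by omega⟩
  · rintro ⟨ha, haN, han, hai, hτ, hle, hsum, hj, hi⟩
    exact ⟨⟨hτ, fun p hp => by have := hle p hp; omega, ha⟩,
      ⟨haN, fun p hp => by have := hle p hp; omega⟩, by omega, by omega, hj⟩

lemma mem_distinctPartitions_iff {M : ℕ} (hM : 0 < M) (i j n : ℕ) (π : List ℕ) :
    π ∈ distinctPartitions M i j n ↔ π ∈ distinctPartitions (M - 1) i j n ∨
      ∃ τ ∈ distinctPartitions (M - 1) j (i - M % 2) (n - M), M % 2 ≤ i ∧ M ≤ n ∧ M :: τ = π := by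
  rcases π with _ | ⟨a, τ⟩
  · simp [nil_mem_distinctPartitions_iff]
  · simp only [cons_mem_distinctPartitions_iff, List.cons.injEq]
    by_cases ha : a = M
    · subst ha
      constructor
      · rintro ⟨-, -, han, hai, hτ⟩
        exact Or.inr ⟨τ, hτ, hai, han, rfl, rfl⟩
      · rintro (⟨-, h, -⟩ | ⟨_, hτ, hai, han, -, rfl⟩)
        · omega
        · exact ⟨hM, le_rfl, han, hai, hτ⟩
    · have : a ≤ M ↔ a ≤ M - 1 := by omega
      simp [Ne.symm ha, this]

lemma distinctPartitions_zero (i j n : ℕ) :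
    distinctPartitions 0 i j n = {π | π = [] ∧ n = 0 ∧ i = 0 ∧ j = 0} := by
  ext (_ | ⟨a, τ⟩)
  · simp [nil_mem_distinctPartitions_iff]
  · simp only [cons_mem_distinctPartitions_iff, Set.mem_ofPred_eq, reduceCtorEq, false_and,
      iff_false]
    omega

lemma ncard_distinctPartitions_zero (i j n : ℕ) :
    (distinctPartitions 0 i j n).ncard = if n = 0 ∧ i = 0 ∧ j = 0 then 1 else 0 := by
  rw [distinctPartitions_zero]
  split_ifs with h <;> simp [h]

lemma ncard_distinctPartitions_of_pos {M : ℕ} (hM : 0 < M) (i j n : ℕ) :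
    (distinctPartitions M i j n).ncard = (distinctPartitions (M - 1) i j n).ncard +
      if M % 2 ≤ i ∧ M ≤ n then (distinctPartitions (M - 1) j (i - M % 2) (n - M)).ncard
      else 0 := by
  split_ifs with h
  · have hsplit : distinctPartitions M i j n = distinctPartitions (M - 1) i j n ∪
        List.cons M '' distinctPartitions (M - 1) j (i - M % 2) (n - M) := by
      ext π
      simp [mem_distinctPartitions_iff hM, h]
    have hdisj : Disjoint (distinctPartitions (M - 1) i j n)
        (List.cons M '' distinctPartitions (M - 1) j (i - M % 2) (n - M)) := by
      rw [Set.disjoint_left]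
      rintro _ hπ ⟨τ, -, rfl⟩
      have := ((cons_mem_distinctPartitions_iff _ _ _ _ _ _).1 hπ).2.1
      omega
    rw [hsplit, Set.ncard_union_eq hdisj (finite_distinctPartitions _ _ _ _)
      ((finite_distinctPartitions _ _ _ _).image _),
      Set.ncard_image_of_injective _ List.cons_injective]
  · have hsame : distinctPartitions M i j n = distinctPartitions (M - 1) i j n := by
      ext π
      rw [mem_distinctPartitions_iff hM]
      tauto
    rw [hsame, add_zero]

theorem stmt1 :
    (∀ i j : ℕ, P 0 i j = if i = 0 ∧ j = 0 then 1 else 0) ∧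
    (∀ N i j ν : ℕ, ν ≤ 1 → 1 - ν ≤ N →
      P (2 * N + ν) i j
        = P (2 * N + ν - 1) i j
          + PowerSeries.X ^ (2 * N + ν) *
            (if ν ≤ i then P (2 * N + ν - 1) j (i - ν) else 0)) := by
  refine ⟨fun i j => ?_, fun N i j ν hν hN => ?_⟩
  · ext n
    rw [coeff_P, ncard_distinctPartitions_zero]
    split_ifs <;> simp_all [PowerSeries.coeff_one]
  · have hM : 0 < 2 * N + ν := by omega
    have hpar : (2 * N + ν) % 2 = ν := by omega
    ext n
    rw [map_add, coeff_P, coeff_P, ncard_distinctPartitions_of_pos hM, hpar,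
      PowerSeries.coeff_X_pow_mul']
    push_cast
    congr 1
    by_cases hνi : ν ≤ i <;> by_cases hMn : 2 * N + ν ≤ n <;> simp [hνi, hMn, coeff_P]
end

section
/- For ν ∈ {0,1} and nonnegative integer N, Σ_{k=−N}^{N+ν} q^{2k²−k} / ((q²;q²)_{N+k} (q²;q²)_{N−k+ν}) = 1/(q;q)_{2N+ν}, as an identity of formal power series in q. -/
/-!
Multiplying by `(q²;q²)_m` with `m = 2N + ν` turns the identity into
`S m := ∑ₖ q^(2k² - k) [m, ⌊m/2⌋ + k]_{q²} = (-q;q)_m`, since `(-q;q)_m (q;q)_m = (q²;q²)_m`.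
Both sides satisfy `S (m + 1) = (1 + q^(m + 1)) S m`: expand the binomial of `S (m + 1)` by
Pascal's rule (the form `[m+1, j] = q^(2(m+1-j)) [m, j-1] + [m, j]` for even `m`,
`[m+1, j] = [m, j-1] + q^(2j) [m, j]` for odd `m`); one half is `S m`, and the other becomes
`q^(m+1) S m` after the reflection `k ↦ 1 - k` (resp. `k ↦ -k`) and the symmetry
`[m, j] = [m, m - j]`.
-/
open Finset Polynomial

noncomputable def qPoch (m : ℕ) : ℚ[X] := ∏ i ∈ range m, (1 - X ^ (i + 1))

lemma qPoch_succ (m : ℕ) : qPoch (m + 1) = qPoch m * (1 - X ^ (m + 1)) :=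
  prod_range_succ _ _

lemma qPoch_ne_zero (m : ℕ) : qPoch m ≠ 0 :=
  prod_ne_zero_iff.2 fun i _ h => by simpa using congrArg (eval 0) h

lemma gaussPoly_zero_right (m : ℕ) : gaussPoly m 0 = 1 := by
  cases m <;> rfl

lemma gaussPoly_succ_succ (m r : ℕ) :
    gaussPoly (m + 1) (r + 1) = gaussPoly m r + X ^ (r + 1) * gaussPoly m (r + 1) :=
  rfl

lemma gaussPoly_eq_zero_of_lt : ∀ {m r : ℕ}, m < r → gaussPoly m r = 0
  | 0, _ + 1, _ => rfl
  | m + 1, r + 1, h => by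
    rw [gaussPoly_succ_succ, gaussPoly_eq_zero_of_lt (by omega),
      gaussPoly_eq_zero_of_lt (by omega), mul_zero, add_zero]

lemma gaussPoly_self (m : ℕ) : gaussPoly m m = 1 := by
  induction m with
  | zero => rfl
  | succ m ih =>
    rw [gaussPoly_succ_succ, ih, gaussPoly_eq_zero_of_lt (by omega), mul_zero, add_zero]

lemma gaussPoly_mul_qPoch {m r : ℕ} (h : r ≤ m) :
    gaussPoly m r * qPoch r * qPoch (m - r) = qPoch m := by
  induction m generalizing r with
  | zero =>
    obtain rfl : r = 0 := by omega
    simp [gaussPoly_zero_right, qPoch]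
  | succ m ih =>
    obtain _ | r := r
    · simp [gaussPoly_zero_right, qPoch]
    obtain ⟨s, rfl⟩ := Nat.exists_eq_add_of_le (Nat.le_of_succ_le_succ h)
    obtain _ | s := s
    · simp [gaussPoly_self, qPoch]
    have h₁ := ih (r := r) (by omega)
    have h₂ := ih (r := r + 1) (by omega)
    rw [show r + (s + 1) - r = s + 1 by omega, qPoch_succ s] at h₁
    rw [show r + (s + 1) - (r + 1) = s by omega, qPoch_succ r] at h₂
    rw [gaussPoly_succ_succ, show r + (s + 1) + 1 - (r + 1) = s + 1 by omega,
      qPoch_succ (r + (s + 1)), qPoch_succ r, qPoch_succ s]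
    have hX : (X : ℚ[X]) ^ (r + 1) * X ^ (s + 1) = X ^ (r + (s + 1) + 1) := by
      rw [← pow_add]; ring_nf
    linear_combination (1 - X ^ (r + 1)) * h₁ + X ^ (r + 1) * (1 - X ^ (s + 1)) * h₂
      - qPoch (r + (s + 1)) * hX

lemma gaussPoly_symm {m r : ℕ} (h : r ≤ m) : gaussPoly m (m - r) = gaussPoly m r := by
  have h₁ := gaussPoly_mul_qPoch h
  rw [← gaussPoly_mul_qPoch (Nat.sub_le m r), Nat.sub_sub_self h, mul_right_comm] at h₁
  exact mul_right_cancel₀ (mul_ne_zero (qPoch_ne_zero _) (qPoch_ne_zero _))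
    (by rw [← mul_assoc, ← mul_assoc, h₁])

lemma gaussZ_natCast (m r : ℕ) : gaussZ m r = gaussPoly m r := by
  simp [gaussZ]

lemma gaussZ_of_neg {m : ℕ} {j : ℤ} (h : j < 0) : gaussZ m j = 0 :=
  if_neg (by omega)

lemma gaussZ_of_lt {m : ℕ} {j : ℤ} (h : (m : ℤ) < j) : gaussZ m j = 0 := by
  rw [gaussZ, if_pos (by omega), gaussPoly_eq_zero_of_lt (by omega)]

lemma gaussZ_eq_zero {m : ℕ} {j : ℤ} (h : ¬(0 ≤ j ∧ j ≤ m)) : gaussZ m j = 0 := by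
  rcases not_and_or.1 h with h | h
  · exact gaussZ_of_neg (by omega)
  · exact gaussZ_of_lt (by omega)

lemma gaussZ_symm (m : ℕ) (j : ℤ) : gaussZ m (m - j) = gaussZ m j := by
  by_cases hj : 0 ≤ j ∧ j ≤ m
  · lift j to ℕ using hj.1
    rw [← Nat.cast_sub (by omega), gaussZ_natCast, gaussZ_natCast, gaussPoly_symm (by omega)]
  · rw [gaussZ_eq_zero hj, gaussZ_eq_zero (by omega)]

lemma gaussZ_succ (m : ℕ) (j : ℤ) :
    gaussZ (m + 1) j = gaussZ m (j - 1) + X ^ j.toNat * gaussZ m j := by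
  rcases lt_trichotomy j 0 with hj | rfl | hj
  · rw [gaussZ_of_neg hj, gaussZ_of_neg (by omega), gaussZ_of_neg hj, mul_zero, add_zero]
  · simp [gaussZ, gaussPoly_zero_right]
  · obtain ⟨r, rfl⟩ : ∃ r : ℕ, j = r + 1 := ⟨(j - 1).toNat, by omega⟩
    rw [add_sub_cancel_right, ← Nat.cast_succ, gaussZ_natCast, gaussZ_natCast, gaussZ_natCast,
      Int.toNat_natCast, gaussPoly_succ_succ]

lemma gaussZ_succ' (m : ℕ) (j : ℤ) :
    gaussZ (m + 1) j = X ^ (m + 1 - j).toNat * gaussZ m (j - 1) + gaussZ m j := by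
  rw [← gaussZ_symm, gaussZ_succ, ← gaussZ_symm m (j - 1), ← gaussZ_symm m j]
  push_cast
  rw [show (m : ℤ) - (j - 1) = m + 1 - j by ring, show (m : ℤ) + 1 - j - 1 = m - j by ring,
    add_comm]

lemma two_mul_sq_sub_self_nonneg (k : ℤ) : 0 ≤ 2 * k ^ 2 - k := by
  nlinarith [sq_nonneg (2 * k - 1)]

lemma pow_toNat_mul_pow_toNat {M : Type*} [Monoid M] (q : M) {a b c : ℤ} (n : ℕ) (ha : 0 ≤ a)
    (hb : 0 ≤ b) (hc : 0 ≤ c) (h : a + b = n + c) :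
    q ^ a.toNat * q ^ b.toNat = q ^ n * q ^ c.toNat := by
  rw [← pow_add, ← pow_add]
  congr 1
  omega

section Algebra

variable {A : Type*} [CommRing A] [Algebra ℚ A] (q : A)

noncomputable def gaussSq (m : ℕ) (j : ℤ) : A := aeval (q ^ 2) (gaussZ m j)

noncomputable def gaussSqSum (m : ℕ) : A :=
  ∑ᶠ k : ℤ, q ^ (2 * k ^ 2 - k).toNat * gaussSq q m ((m / 2 : ℕ) + k)

lemma gaussSq_eq_zero {m : ℕ} {j : ℤ} (h : ¬(0 ≤ j ∧ j ≤ m)) : gaussSq q m j = 0 := by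
  rw [gaussSq, gaussZ_eq_zero h, map_zero]

lemma hasFiniteSupport_gaussSq (m : ℕ) : Function.HasFiniteSupport (gaussSq q m) :=
  (Set.finite_Icc 0 (m : ℤ)).subset fun j hj => by
    by_contra h
    exact hj (gaussSq_eq_zero q (by simpa using h))

lemma gaussSq_symm (m : ℕ) (j : ℤ) : gaussSq q m (m - j) = gaussSq q m j := by
  rw [gaussSq, gaussZ_symm, gaussSq]

lemma gaussSq_succ (m : ℕ) (j : ℤ) :
    gaussSq q (m + 1) j = gaussSq q m (j - 1) + q ^ (2 * j).toNat * gaussSq q m j := by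
  rw [gaussSq, gaussZ_succ, map_add, map_mul, map_pow, aeval_X, ← pow_mul,
    show 2 * j.toNat = (2 * j).toNat by omega, gaussSq, gaussSq]

lemma gaussSq_succ' (m : ℕ) (j : ℤ) :
    gaussSq q (m + 1) j = q ^ (2 * (m + 1 - j)).toNat * gaussSq q m (j - 1) + gaussSq q m j := by
  rw [gaussSq, gaussZ_succ', map_add, map_mul, map_pow, aeval_X, ← pow_mul,
    show 2 * (m + 1 - j).toNat = (2 * (m + 1 - j)).toNat by omega, gaussSq, gaussSq]

lemma hasFiniteSupport_mul_gaussSq (c : ℤ → A) (m : ℕ) {g : ℤ → ℤ} (hg : g.Injective) :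
    Function.HasFiniteSupport fun k => c k * gaussSq q m (g k) :=
  ((hasFiniteSupport_gaussSq q m).comp_of_injective hg).fun_mul_right c

lemma gaussSqSum_two_mul_add_one (N : ℕ) :
    gaussSqSum q (2 * N + 1) = (1 + q ^ (2 * N + 1)) * gaussSqSum q (2 * N) := by
  have h₁ : (2 * N + 1) / 2 = N := by omega
  have h₀ : 2 * N / 2 = N := by omega
  simp only [gaussSqSum, h₁, h₀, gaussSq_succ', mul_add, ← mul_assoc]
  rw [finsum_add_distrib (hasFiniteSupport_mul_gaussSq q _ _ fun a b h => by simpa using h)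
    (hasFiniteSupport_mul_gaussSq q _ _ (add_right_injective _)), add_mul, one_mul, add_comm]
  congr 1
  rw [← finsum_comp_equiv (Equiv.subLeft 1),
    mul_finsum' _ _ (hasFiniteSupport_mul_gaussSq q _ _ (add_right_injective _))]
  refine finsum_congr fun k => ?_
  rw [Equiv.subLeft_apply]
  by_cases hk : 0 ≤ (N : ℤ) + k ∧ (N : ℤ) + k ≤ (2 * N : ℕ)
  · rw [pow_toNat_mul_pow_toNat q (2 * N + 1) (two_mul_sq_sub_self_nonneg _) (by omega)
      (two_mul_sq_sub_self_nonneg k) (by push_cast; ring), mul_assoc,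
      show (N : ℤ) + (1 - k) - 1 = (2 * N : ℕ) - (N + k) by push_cast; ring, gaussSq_symm]
  · rw [gaussSq_eq_zero q hk, gaussSq_eq_zero q (by push_cast at hk ⊢; omega), mul_zero,
      mul_zero, mul_zero]

lemma gaussSqSum_two_mul_add_two (N : ℕ) :
    gaussSqSum q (2 * N + 1 + 1) = (1 + q ^ (2 * N + 1 + 1)) * gaussSqSum q (2 * N + 1) := by
  have h₂ : (2 * N + 1 + 1) / 2 = N + 1 := by omega
  have h₁ : (2 * N + 1) / 2 = N := by omega
  simp only [gaussSqSum, h₂, h₁, gaussSq_succ q (2 * N + 1), mul_add, ← mul_assoc,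
    Nat.cast_succ]
  rw [finsum_add_distrib (hasFiniteSupport_mul_gaussSq q _ _ fun a b h => by simpa using h)
    (hasFiniteSupport_mul_gaussSq q _ _ (add_right_injective _)), add_mul, one_mul]
  congr 1
  · exact finsum_congr fun k => by rw [add_right_comm, add_sub_cancel_right]
  rw [← finsum_comp_equiv (Equiv.neg ℤ),
    mul_finsum' _ _ (hasFiniteSupport_mul_gaussSq q _ _ (add_right_injective _))]
  refine finsum_congr fun k => ?_
  rw [Equiv.neg_apply]
  by_cases hk : 0 ≤ (N : ℤ) + k ∧ (N : ℤ) + k ≤ (2 * N + 1 : ℕ)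
  · rw [pow_toNat_mul_pow_toNat q (2 * N + 1 + 1) (two_mul_sq_sub_self_nonneg _) (by omega)
      (two_mul_sq_sub_self_nonneg k) (by push_cast; ring), mul_assoc,
      show (N : ℤ) + 1 + -k = (2 * N + 1 : ℕ) - (N + k) by push_cast; ring, gaussSq_symm]
  · rw [gaussSq_eq_zero q hk, gaussSq_eq_zero q (by push_cast at hk ⊢; omega), mul_zero,
      mul_zero, mul_zero]

lemma gaussSqSum_zero : gaussSqSum q 0 = 1 := by
  rw [gaussSqSum, finsum_eq_single _ 0 fun k hk => by
    rw [gaussSq_eq_zero q (by omega), mul_zero]]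
  simp [gaussSq, gaussZ, gaussPoly_zero_right]

lemma gaussSqSum_succ (m : ℕ) : gaussSqSum q (m + 1) = (1 + q ^ (m + 1)) * gaussSqSum q m := by
  obtain ⟨N, rfl | rfl⟩ := Nat.even_or_odd' m
  · exact gaussSqSum_two_mul_add_one q N
  · exact gaussSqSum_two_mul_add_two q N

theorem gaussSqSum_eq_prod (m : ℕ) : gaussSqSum q m = ∏ i ∈ range m, (1 + q ^ (i + 1)) := by
  induction m with
  | zero => exact gaussSqSum_zero q
  | succ m ih => rw [gaussSqSum_succ, ih, prod_range_succ, mul_comm]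

lemma aeval_sq_qPoch (m : ℕ) :
    aeval (q ^ 2) (qPoch m) = ∏ n ∈ range m, (1 - q ^ (2 * n + 2)) := by
  simp only [qPoch, map_prod, map_sub, map_one, map_pow, aeval_X, ← pow_mul, mul_add, mul_one]

lemma gaussSq_mul_prod {m : ℕ} {j : ℤ} (hj : 0 ≤ j ∧ j ≤ m) :
    gaussSq q m j * ((∏ n ∈ range j.toNat, (1 - q ^ (2 * n + 2))) *
      ∏ n ∈ range (m - j).toNat, (1 - q ^ (2 * n + 2))) =
      ∏ n ∈ range m, (1 - q ^ (2 * n + 2)) := by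
  lift j to ℕ using hj.1
  rw [Int.toNat_natCast, show ((m : ℤ) - j).toNat = m - j by omega, ← aeval_sq_qPoch,
    ← aeval_sq_qPoch, ← aeval_sq_qPoch, gaussSq, gaussZ_natCast, ← mul_assoc, ← map_mul,
    ← map_mul, gaussPoly_mul_qPoch (by omega)]

end Algebra

lemma prod_one_add_pow_mul_prod_one_sub_pow {R : Type*} [CommRing R] (q : R) (m : ℕ) :
    (∏ i ∈ range m, (1 + q ^ (i + 1))) * ∏ i ∈ range m, (1 - q ^ (i + 1)) =
      ∏ i ∈ range m, (1 - q ^ (2 * i + 2)) := by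
  rw [← prod_mul_distrib]
  exact prod_congr rfl fun i _ => by ring

lemma PowerSeries.inv_eq_mul_inv_of_mul_eq {k : Type*} [Field k] {φ ψ χ : PowerSeries k}
    (hχ : PowerSeries.constantCoeff χ ≠ 0) (h : ψ * φ = χ) : φ⁻¹ = ψ * χ⁻¹ := by
  have hφ : PowerSeries.constantCoeff φ ≠ 0 := fun h0 =>
    hχ (by rw [← h, map_mul, h0, mul_zero])
  rw [PowerSeries.inv_eq_iff_mul_eq_one hφ, mul_right_comm, h, PowerSeries.mul_inv_cancel _ hχ]

theorem stmt11 (N ν : ℕ) (hν : ν ≤ 1) :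
    ∑ k ∈ Finset.Icc (-(N : ℤ)) ((N : ℤ) + ν),
      PowerSeries.X ^ (2 * k ^ 2 - k).toNat *
        ((∏ n ∈ Finset.range ((N : ℤ) + k).toNat,
            (1 - (PowerSeries.X : PowerSeries ℚ) ^ (2 * n + 2))) *
         (∏ n ∈ Finset.range ((N : ℤ) - k + ν).toNat,
            (1 - PowerSeries.X ^ (2 * n + 2))))⁻¹ =
    (∏ n ∈ Finset.range (2 * N + ν), (1 - (PowerSeries.X : PowerSeries ℚ) ^ (n + 1)))⁻¹ := by
  set q : PowerSeries ℚ := PowerSeries.X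
  set P := ∏ n ∈ range (2 * N + ν), (1 - q ^ (2 * n + 2)) with hP_def
  have hm : (2 * N + ν) / 2 = N := by omega
  have hP : PowerSeries.constantCoeff P ≠ 0 := by simp [hP_def, q]
  have hsupp : Function.support (fun k : ℤ => q ^ (2 * k ^ 2 - k).toNat *
      gaussSq q (2 * N + ν) (((2 * N + ν) / 2 : ℕ) + k)) ⊆ Icc (-(N : ℤ)) (N + ν) := by
    intro k hk
    by_contra hk'
    rw [mem_coe, mem_Icc] at hk'
    simp only [Function.mem_support, hm] at hk
    exact hk (by rw [gaussSq_eq_zero q (by push_cast; omega), mul_zero])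
  calc _ = ∑ k ∈ Icc (-(N : ℤ)) (N + ν),
        q ^ (2 * k ^ 2 - k).toNat * gaussSq q (2 * N + ν) (N + k) * P⁻¹ :=
        sum_congr rfl fun k hk => by
          rw [mem_Icc] at hk
          rw [mul_assoc, show (N : ℤ) - k + ν = (2 * N + ν : ℕ) - (N + k) by push_cast; ring,
            PowerSeries.inv_eq_mul_inv_of_mul_eq hP (gaussSq_mul_prod q (by push_cast; omega))]
    _ = gaussSqSum q (2 * N + ν) * P⁻¹ := by
        rw [← sum_mul, gaussSqSum, finsum_eq_finsetSum_of_support_subset _ hsupp, hm]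
    _ = _ := by
        rw [gaussSqSum_eq_prod, PowerSeries.inv_eq_mul_inv_of_mul_eq hP
          (prod_one_add_pow_mul_prod_one_sub_pow q _)]
end

section
/- Let N, n, k be non-negative integers. The number of partitions of n into at most N parts with exactly k odd parts equals the number of partitions of n into parts ≤ N whose alternating sum of parts equals k. -/
/-!
Conjugation of partitions (transposing the Young diagram) is an involution that exchanges
"at most `N` parts" with "parts `≤ N`" and preserves the sum. It also turns the number of odd
parts into the alternating sum: the first part of the conjugate is `ℓ(π)`, and what remains is
the conjugate of `π` with its first column removed, whose odd parts are the parts `p - 1` for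
the even parts `p` of `π`. By induction the alternating sum of the conjugate is
`ℓ(π) - #even(π) = #odd(π)`.
-/

namespace List

def colLen (π : List ℕ) (j : ℕ) : ℕ := π.countP (j < ·)

/-- For a partition, `π.headI` is its largest part (and `0` for `[]`). -/
def conjugate (π : List ℕ) : List ℕ := (range π.headI).map π.colLen

def removeFirstColumn (π : List ℕ) : List ℕ := (π.map (· - 1)).filter (· ≠ 0)

lemma range_filter_lt_of_le {a b : ℕ} (h : b ≤ a) : (range a).filter (· < b) = range b := by
  obtain ⟨c, rfl⟩ := Nat.exists_eq_add_of_le h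
  rw [range_add, filter_append, filter_eq_self.2 (by simp), filter_eq_nil_iff.2 (by simp),
    append_nil]

lemma colLen_succ (π : List ℕ) (j : ℕ) : π.colLen (j + 1) = π.removeFirstColumn.colLen j := by
  rw [colLen, colLen, removeFirstColumn, countP_filter, countP_map]
  refine countP_congr fun p _ => ?_
  simp only [Function.comp_apply, Bool.and_eq_true, decide_eq_true_eq, ne_eq]
  omega

lemma colLen_cons_of_lt {a j : ℕ} (t : List ℕ) (h : j < a) :
    (a :: t).colLen j = t.colLen j + 1 := by
  simp [colLen, h]

lemma le_length_of_mem_conjugate {π : List ℕ} {p : ℕ} (hp : p ∈ π.conjugate) :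
    p ≤ π.length := by
  obtain ⟨j, -, rfl⟩ := mem_map.mp hp
  exact countP_le_length

lemma length_conjugate (π : List ℕ) : π.conjugate.length = π.headI := by
  rw [conjugate, length_map, length_range]

lemma length_removeFirstColumn_le (π : List ℕ) : π.removeFirstColumn.length ≤ π.length :=
  (length_filter_le _ _).trans (length_map _).le

end List

namespace IsPartition

variable {π : List ℕ}

lemma nil : IsPartition [] := ⟨List.isChain_nil, by simp⟩

lemma pairwise (hπ : IsPartition π) : π.Pairwise (· ≥ ·) :=
  List.isChain_iff_pairwise.mp hπ.1

lemma tail (hπ : IsPartition π) : IsPartition π.tail :=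
  ⟨hπ.1.tail, fun p hp => hπ.2 p (List.mem_of_mem_tail hp)⟩

lemma le_headI (hπ : IsPartition π) {p : ℕ} (hp : p ∈ π) : p ≤ π.headI := by
  cases π with
  | nil => simp at hp
  | cons a t =>
    rcases List.mem_cons.mp hp with rfl | hp
    · rfl
    · exact List.rel_of_pairwise_cons hπ.pairwise hp

lemma colLen_pos_iff (hπ : IsPartition π) (j : ℕ) : 0 < π.colLen j ↔ j < π.headI := by
  rw [List.colLen, List.countP_pos_iff]
  constructor
  · rintro ⟨p, hp, hjp⟩
    exact (decide_eq_true_iff.mp hjp).trans_le (hπ.le_headI hp)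
  · intro h
    cases π with
    | nil => simp at h
    | cons a t => exact ⟨a, List.mem_cons_self, decide_eq_true h⟩

lemma colLen_zero (hπ : IsPartition π) : π.colLen 0 = π.length :=
  List.countP_eq_length.mpr fun p hp => decide_eq_true (hπ.2 p hp)

lemma removeFirstColumn (hπ : IsPartition π) : IsPartition π.removeFirstColumn := by
  refine ⟨List.isChain_iff_pairwise.mpr ?_, fun p hp => ?_⟩
  · refine (hπ.pairwise.map _ fun a b h => ?_).sublist List.filter_sublist
    omega
  · simpa [Nat.pos_iff_ne_zero] using (List.mem_filter.mp hp).2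

lemma headI_removeFirstColumn (hπ : IsPartition π) :
    π.removeFirstColumn.headI = π.headI - 1 := by
  cases π with
  | nil => rfl
  | cons a t =>
    by_cases ha : a = 1
    · -- then every part is `1`, and removing the first column leaves nothing
      suffices (a :: t).removeFirstColumn = [] by rw [this, ha]; rfl
      refine List.filter_eq_nil_iff.mpr fun x hx => ?_
      obtain ⟨p, hp, rfl⟩ := List.mem_map.mp hx
      have := hπ.le_headI hp
      simp only [List.headI_cons] at this
      simp only [ne_eq, decide_not, Bool.not_eq_eq_eq_not, Bool.not_true, decide_eq_false_iff_not,
        Decidable.not_not]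
      omega
    · have : 1 < a := by have := hπ.2 a List.mem_cons_self; omega
      simp [List.removeFirstColumn, show a - 1 ≠ 0 by omega]

lemma sum_removeFirstColumn_add_length (hπ : IsPartition π) :
    π.removeFirstColumn.sum + π.length = π.sum := by
  induction π with
  | nil => rfl
  | cons a t ih =>
    have ha := hπ.2 a List.mem_cons_self
    have ht := ih hπ.tail
    simp only [List.removeFirstColumn] at ht ⊢
    rw [List.map_cons, List.filter_cons]
    split_ifs with h <;>
      simp only [List.sum_cons, List.length_cons, decide_eq_true_eq] at h ⊢ <;> omega

lemma countP_odd_removeFirstColumn_add (hπ : IsPartition π) :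
    π.removeFirstColumn.countP (· % 2 == 1) + π.countP (· % 2 == 1) = π.length := by
  rw [List.length_eq_countP_add_countP (· % 2 == 1), add_comm]
  congr 1
  rw [List.removeFirstColumn, List.countP_filter, List.countP_map]
  refine List.countP_congr fun p hp => ?_
  have := hπ.2 p hp
  simp only [Function.comp_apply, Bool.and_eq_true, beq_iff_eq, ne_eq, decide_eq_true_eq]
  omega

lemma conjugate_eq_cons (hπ : IsPartition π) (hne : π ≠ []) :
    π.conjugate = π.length :: π.removeFirstColumn.conjugate := by
  have hpos : 0 < π.headI := (hπ.colLen_pos_iff 0).mp (by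
    rw [hπ.colLen_zero]; exact List.length_pos_iff.mpr hne)
  rw [List.conjugate, List.conjugate, hπ.headI_removeFirstColumn, ← Nat.sub_add_cancel hpos,
    List.range_succ_eq_map, List.map_cons, List.map_map, ← hπ.colLen_zero, Nat.add_sub_cancel]
  exact congrArg _ (List.map_congr_left fun j _ => List.colLen_succ π j)

theorem induction_removeFirstColumn {motive : ∀ π, IsPartition π → Prop}
    (nil : motive [] IsPartition.nil)
    (step : ∀ π (hπ : IsPartition π), π ≠ [] →
      motive π.removeFirstColumn hπ.removeFirstColumn → motive π hπ)
    (hπ : IsPartition π) : motive π hπ := by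
  induction h : π.sum using Nat.strong_induction_on generalizing π with
  | _ n ih =>
    by_cases hne : π = []
    · subst hne; exact nil
    refine step π hπ hne (ih _ ?_ _ rfl)
    have := hπ.sum_removeFirstColumn_add_length
    have := List.length_pos_iff.mpr hne
    omega

lemma conjugate (hπ : IsPartition π) : IsPartition π.conjugate := by
  induction hπ using induction_removeFirstColumn with
  | nil => exact IsPartition.nil
  | step π hπ hne ih =>
    rw [hπ.conjugate_eq_cons hne]
    refine ⟨List.isChain_cons.mpr ⟨fun y hy => ?_, ih.1⟩, fun p hp => ?_⟩
    · exact (List.le_length_of_mem_conjugate (List.mem_of_mem_head? hy)).trans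
        (List.length_removeFirstColumn_le π)
    · rcases List.mem_cons.mp hp with rfl | hp
      · exact List.length_pos_iff.mpr hne
      · exact ih.2 p hp

lemma sum_conjugate (hπ : IsPartition π) : π.conjugate.sum = π.sum := by
  induction hπ using induction_removeFirstColumn with
  | nil => rfl
  | step π hπ hne ih =>
    rw [hπ.conjugate_eq_cons hne, List.sum_cons, ih, add_comm,
      hπ.sum_removeFirstColumn_add_length]

lemma altSum_conjugate (hπ : IsPartition π) :
    altSum π.conjugate = π.countP (· % 2 == 1) := by
  induction hπ using induction_removeFirstColumn with
  | nil => rfl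
  | step π hπ hne ih =>
    rw [hπ.conjugate_eq_cons hne, altSum, ih, ← hπ.countP_odd_removeFirstColumn_add]
    push_cast
    ring

lemma removeFirstColumn_conjugate_cons {a : ℕ} {t : List ℕ} (hπ : IsPartition (a :: t)) :
    (a :: t).conjugate.removeFirstColumn = t.conjugate := by
  have hta : t.headI ≤ a := by
    cases t with
    | nil => exact Nat.zero_le a
    | cons b s => exact hπ.le_headI (List.mem_cons_of_mem a List.mem_cons_self)
  have hcol : ∀ j ∈ List.range a, ((· - 1) ∘ (a :: t).colLen) j = t.colLen j := fun j hj => by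
    rw [Function.comp_apply, List.colLen_cons_of_lt t (List.mem_range.mp hj), Nat.add_sub_cancel]
  rw [List.removeFirstColumn, List.conjugate, List.headI_cons, List.map_map,
    List.map_congr_left hcol, List.filter_map, List.conjugate]
  congr 1
  rw [← List.range_filter_lt_of_le hta]
  refine List.filter_congr fun j _ => ?_
  have ht : IsPartition t := hπ.tail
  simp only [Function.comp_apply, ne_eq, ← Nat.pos_iff_ne_zero, ht.colLen_pos_iff]

lemma conjugate_conjugate (hπ : IsPartition π) : π.conjugate.conjugate = π := by
  induction π with
  | nil => rfl
  | cons a t ih =>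
    rw [hπ.conjugate.conjugate_eq_cons (by simp [hπ.conjugate_eq_cons]),
      List.length_conjugate, hπ.removeFirstColumn_conjugate_cons, ih hπ.tail]
    rfl

lemma forall_mem_conjugate_le_iff (hπ : IsPartition π) (N : ℕ) :
    (∀ p ∈ π.conjugate, p ≤ N) ↔ π.length ≤ N := by
  refine ⟨fun h => ?_, fun h p hp => (List.le_length_of_mem_conjugate hp).trans h⟩
  by_cases hne : π = []
  · simp [hne]
  · exact h _ (hπ.conjugate_eq_cons hne ▸ List.mem_cons_self)

theorem card_eq_card_of_conjugate {P Q : List ℕ → Prop}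
    (hPQ : ∀ π, IsPartition π → (P π ↔ Q π.conjugate)) :
    Nat.card {π : List ℕ // IsPartition π ∧ P π} =
      Nat.card {π : List ℕ // IsPartition π ∧ Q π} :=
  Nat.card_congr
    { toFun := fun π => ⟨π.1.conjugate, π.2.1.conjugate, (hPQ π π.2.1).mp π.2.2⟩
      invFun := fun π => ⟨π.1.conjugate, π.2.1.conjugate,
        (hPQ _ π.2.1.conjugate).mpr (by rw [π.2.1.conjugate_conjugate]; exact π.2.2)⟩
      left_inv := fun π => Subtype.ext π.2.1.conjugate_conjugate
      right_inv := fun π => Subtype.ext π.2.1.conjugate_conjugate }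

end IsPartition

theorem stmt15 (N n k : ℕ) :
    Nat.card {π : List ℕ // IsPartition π ∧ π.length ≤ N ∧ π.sum = n ∧
      (π.filter fun p => p % 2 == 1).length = k} =
    Nat.card {π : List ℕ // IsPartition π ∧ (∀ p ∈ π, p ≤ N) ∧ π.sum = n ∧
      altSum π = (k : ℤ)} := by
  refine IsPartition.card_eq_card_of_conjugate fun π hπ => ?_
  rw [hπ.forall_mem_conjugate_le_iff, hπ.sum_conjugate, hπ.altSum_conjugate,
    ← List.countP_eq_length_filter, Nat.cast_inj]
end

section
/- Let μ ∈ {0,1}, and let N, 2M+μ be positive integers, n, k non-negative integers. Then the number of partitions of n into parts ≤ 2M+μ with at most N parts, exactly k of which are odd, equals the number of partitions of n into parts ≤ N with at most 2M+μ parts whose alternating sum of parts equals k. -/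
/-! Conjugation of partitions is transposition of Young diagrams: it exchanges the largest part
with the number of parts and keeps the number of cells. Weighting the cell `(i, j)` by `(-1) ^ j`
and summing row by row gives `∑ᵢ ∑_{j < λᵢ} (-1) ^ j`, the number of odd parts of `λ`; summing the
same weights column by column gives `∑ⱼ (-1) ^ j λ'ⱼ`, the alternating sum of the conjugate `λ'`. -/

open Finset

lemma isPartition_iff (π : List ℕ) : IsPartition π ↔ π.SortedGE ∧ ∀ p ∈ π, 0 < p :=
  and_congr_left' List.sortedGE_iff_isChain.symm

lemma card_partitions_eq_card_youngDiagrams (P : List ℕ → Prop) :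
    Nat.card {π : List ℕ // IsPartition π ∧ P π} = Nat.card {μ : YoungDiagram // P μ.rowLens} :=
  Nat.card_congr <|
    (Equiv.subtypeEquivRight fun π => and_congr_left' (isPartition_iff π)).trans <|
      (Equiv.subtypeSubtypeEquivSubtypeInter _ P).symm.trans <|
        (YoungDiagram.equivListRowLens.subtypeEquiv fun _ => Iff.rfl).symm

lemma altSum_map_range (g : ℕ → ℕ) (m : ℕ) :
    altSum ((List.range m).map g) = ∑ i ∈ range m, (-1 : ℤ) ^ i * g i := by
  induction m generalizing g with
  | zero => simp [altSum]
  | succ m ih =>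
    rw [List.range_succ_eq_map, List.map_cons, List.map_map, altSum, ih, sum_range_succ']
    simp only [Function.comp_apply, pow_succ, mul_neg_one, neg_mul, sum_neg_distrib]
    ring

lemma List.sum_map_sum_range_neg_one_pow (l : List ℕ) :
    (l.map fun r => ∑ j ∈ Finset.range r, (-1 : ℤ) ^ j).sum =
      (l.filter fun p => p % 2 == 1).length := by
  induction l with
  | nil => simp
  | cons r l ih =>
    rw [List.map_cons, List.sum_cons, ih, neg_one_geom_sum, List.filter_cons]
    rcases Nat.mod_two_eq_zero_or_one r with hr | hr <;>
      simp [hr, Nat.even_iff, add_comm]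

namespace YoungDiagram

variable (μ : YoungDiagram)

lemma forall_mem_rowLens_le_iff (B : ℕ) : (∀ p ∈ μ.rowLens, p ≤ B) ↔ μ.rowLen 0 ≤ B := by
  simp only [rowLens, List.mem_map, List.mem_range, forall_exists_index, and_imp,
    forall_apply_eq_imp_iff₂]
  refine ⟨fun h => ?_, fun h i _ => (μ.rowLen_anti 0 i i.zero_le).trans h⟩
  rcases (μ.rowLen 0).eq_zero_or_pos with h0 | h0
  · rw [h0]
    exact B.zero_le
  · exact h 0 (mem_iff_lt_colLen.1 (mem_iff_lt_rowLen.2 h0))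

lemma sum_cells_eq_sum_sum_rowLen {M : Type*} [AddCommMonoid M] (g : ℕ × ℕ → M) :
    ∑ c ∈ μ.cells, g c = ∑ i ∈ range (μ.colLen 0), ∑ j ∈ range (μ.rowLen i), g (i, j) := by
  refine sum_finset_product _ _ _ fun ⟨i, j⟩ => ?_
  simp only [mem_cells, mem_range, ← mem_iff_lt_rowLen, ← mem_iff_lt_colLen]
  exact ⟨fun h => ⟨μ.up_left_mem le_rfl j.zero_le h, h⟩, And.right⟩

lemma sum_cells_transpose {M : Type*} [AddCommMonoid M] (g : ℕ × ℕ → M) :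
    ∑ c ∈ μ.transpose.cells, g c = ∑ c ∈ μ.cells, g c.swap := by
  simp [transpose, Equiv.finsetCongr_apply, sum_map]

lemma sum_map_rowLens {M : Type*} [AddCommMonoid M] (f : ℕ → M) :
    (μ.rowLens.map f).sum = ∑ i ∈ range (μ.colLen 0), f (μ.rowLen i) := by
  rw [rowLens, List.map_map]
  rfl

lemma sum_rowLens : μ.rowLens.sum = μ.card := by
  rw [YoungDiagram.card, card_eq_sum_ones, sum_cells_eq_sum_sum_rowLen]
  simpa using μ.sum_map_rowLens id

lemma sum_rowLens_transpose : μ.transpose.rowLens.sum = μ.rowLens.sum := by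
  simp only [sum_rowLens, YoungDiagram.card, card_eq_sum_ones, sum_cells_transpose]

lemma altSum_rowLens : altSum μ.rowLens = ∑ c ∈ μ.cells, (-1 : ℤ) ^ c.1 := by
  rw [rowLens, altSum_map_range, sum_cells_eq_sum_sum_rowLen]
  simp [mul_comm]

lemma altSum_rowLens_transpose :
    altSum μ.transpose.rowLens = (μ.rowLens.filter fun p => p % 2 == 1).length := by
  rw [altSum_rowLens, sum_cells_transpose, ← List.sum_map_sum_range_neg_one_pow,
    sum_map_rowLens, sum_cells_eq_sum_sum_rowLen]
  rfl

end YoungDiagram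

theorem stmt19_general (N M μ n k : ℕ) :
    Nat.card {π : List ℕ // IsPartition π ∧ (∀ p ∈ π, p ≤ 2 * M + μ) ∧ π.length ≤ N ∧
      π.sum = n ∧ (π.filter fun p => p % 2 == 1).length = k} =
    Nat.card {π : List ℕ // IsPartition π ∧ (∀ p ∈ π, p ≤ N) ∧ π.length ≤ 2 * M + μ ∧
      π.sum = n ∧ altSum π = (k : ℤ)} := by
  rw [card_partitions_eq_card_youngDiagrams, card_partitions_eq_card_youngDiagrams]
  refine Nat.card_congr (YoungDiagram.transposeOrderIso.toEquiv.subtypeEquiv fun ν => ?_)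
  simp only [RelIso.coe_fn_toEquiv, YoungDiagram.transposeOrderIso_apply,
    YoungDiagram.forall_mem_rowLens_le_iff, YoungDiagram.length_rowLens,
    YoungDiagram.rowLen_transpose, YoungDiagram.colLen_transpose,
    YoungDiagram.sum_rowLens_transpose, YoungDiagram.altSum_rowLens_transpose, Nat.cast_inj]
  tauto

theorem stmt19 (N M μ n k : ℕ) (hμ : μ ≤ 1) (hN : 0 < N) (hM : 0 < 2 * M + μ) :
    Nat.card {π : List ℕ // IsPartition π ∧ (∀ p ∈ π, p ≤ 2 * M + μ) ∧ π.length ≤ N ∧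
      π.sum = n ∧ (π.filter fun p => p % 2 == 1).length = k} =
    Nat.card {π : List ℕ // IsPartition π ∧ (∀ p ∈ π, p ≤ N) ∧ π.length ≤ 2 * M + μ ∧
      π.sum = n ∧ altSum π = (k : ℤ)} :=
  stmt19_general N M μ n k
end
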